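/- Discrete integration by parts for the average operator: for u defined on the closed mesh and v on the dual mesh, ∫_M u·A_h v = ∫_{M*} v·A_h u - (h/2)·Σ_{x∈∂M} u(x)·t_r(v)(x). -/

import Mathlib

/-! Index the nodes by `U i = u (i h)` and the dual nodes by `V i = v ((i + 1/2) h)`; both sides
are then the same bilinear sum in `U` and `V` regrouped (Abel summation), and the two terms left
over are the boundary ones, since `(M + 1) h = 1`. -/

open Finset

theorem sum_range_mul_add_succ {R : Type*} [CommRing R] (U V : ℕ → R) (M : ℕ) :
    ∑ i ∈ range M, U (i + 1) * (V (i + 1) + V i)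
      = ∑ i ∈ range (M + 1), V i * (U (i + 1) + U i) - (U (M + 1) * V M + U 0 * V 0) := by
  induction M with
  | zero => simp only [range_zero, sum_empty, zero_add, range_one, sum_singleton]; ring
  | succ n ih =>
    rw [sum_range_succ, ih, sum_range_succ _ (n + 1)]
    ring

/-- Discrete integration by parts for the average operator:
`∫_M u·A_h v = ∫_{M*} v·A_h u - (h/2)·(u(1)·v(1-h/2) + u(0)·v(h/2))`
on the mesh with step `h = 1/(M+1)`. -/
theorem discrete_space_ibp_Ah (M : ℕ) (u v : ℝ → ℝ) :
    let h : ℝ := 1 / (M + 1)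
    h * ∑ i ∈ Finset.Icc 1 M, u (i * h) * ((v (i * h + h / 2) + v (i * h - h / 2)) / 2)
      = h * ∑ i ∈ Finset.Icc 0 M,
            v (((i : ℝ) + 1 / 2) * h) *
              ((u (((i : ℝ) + 1 / 2) * h + h / 2) + u (((i : ℝ) + 1 / 2) * h - h / 2)) / 2)
        - (h / 2) * (u 1 * v (1 - h / 2) + u 0 * v (0 + h / 2)) := by
  intro h
  set U : ℕ → ℝ := fun i => u (i * h)
  set V : ℕ → ℝ := fun i => v ((i + 1 / 2) * h)
  have hL : ∑ i ∈ Icc 1 M, u (i * h) * ((v (i * h + h / 2) + v (i * h - h / 2)) / 2)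
      = (∑ i ∈ range M, U (i + 1) * (V (i + 1) + V i)) / 2 := by
    rw [← Ico_add_one_right_eq_Icc, sum_Ico_eq_sum_range, sum_div]
    refine sum_congr (by simp) fun i _ => ?_
    simp only [U, V]
    push_cast
    ring_nf
  have hR : ∑ i ∈ Icc 0 M, v (((i : ℝ) + 1 / 2) * h) *
        ((u (((i : ℝ) + 1 / 2) * h + h / 2) + u (((i : ℝ) + 1 / 2) * h - h / 2)) / 2)
      = (∑ i ∈ range (M + 1), V i * (U (i + 1) + U i)) / 2 := by
    rw [← Ico_add_one_right_eq_Icc, ← range_eq_Ico, sum_div]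
    refine sum_congr rfl fun i _ => ?_
    simp only [U, V]
    push_cast
    ring_nf
  have hMh : ((M : ℝ) + 1) * h = 1 := by simp only [h]; field_simp
  have hB : u 1 * v (1 - h / 2) + u 0 * v (0 + h / 2) = U (M + 1) * V M + U 0 * V 0 := by
    simp only [U, V]
    push_cast
    rw [hMh, show ((M : ℝ) + 1 / 2) * h = 1 - h / 2 by linear_combination hMh]
    ring_nf
  rw [hL, hR, hB, sum_range_mul_add_succ]
  ring
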